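/- For every session contract σ, the set of session contracts reachable from σ under the reflexive–transitive closure of its labelled transition system (τ-steps and action-labelled steps, with recursion unfolded equi-recursively) is finite. -/

import Mathlib

/-! Core formalisation: session contracts, session orchestrators, orchestrated systems,
    buffers, (finite and infinite) sequences of orchestration actions, respectfulness,
    and the compliance relations. Names are natural numbers. Recursion binders use
    de Bruijn indices (`var n`, with `mu` binding index 0); equi-recursive identification
    of `rec x.σ` with its unfolding is realised by unfolding rules in the LTSs. -/

abbrev Name := ℕ

/-- Actions of session contracts: an input `a` or an output `ā`. -/
inductive Act : Type where
  | inp : Name → Act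
  | out : Name → Act
deriving DecidableEq

/-- Orchestration actions:
    `cIn a` = ⟨a,ε⟩, `cSync a` = ⟨a,ā⟩ (category ι_L);
    `sIn a` = ⟨ε,a⟩, `sSync a` = ⟨ā,a⟩ (category ι_R);
    `cOut a` = ⟨ā,ε⟩, `sOut a` = ⟨ε,ā⟩ (category o). -/
inductive OAct : Type where
  | cIn   : Name → OAct
  | cSync : Name → OAct
  | sIn   : Name → OAct
  | sSync : Name → OAct
  | cOut  : Name → OAct
  | sOut  : Name → OAct
deriving DecidableEq

def OAct.catL : OAct → Prop
  | .cIn _ => True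
  | .cSync _ => True
  | _ => False

def OAct.catR : OAct → Prop
  | .sIn _ => True
  | .sSync _ => True
  | _ => False

def OAct.catO : OAct → Prop
  | .cOut _ => True
  | .sOut _ => True
  | _ => False

/-- Raw session contracts: `one` = 1 (success), `ext l` = external choice a₁.σ₁+⋯+aₙ.σₙ,
    `int l` = internal choice ā₁.σ₁⊕⋯⊕āₙ.σₙ, de Bruijn variables and recursion. -/
inductive SC : Type where
  | one : SC
  | ext : List (Name × SC) → SC
  | int : List (Name × SC) → SC
  | var : ℕ → SC
  | mu : SC → SC

namespace SC

/-- Substitution of the (closed) term `u` for the variable of de Bruijn index `k`. -/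
def subst (u : SC) : SC → ℕ → SC
  | SC.one, _ => SC.one
  | SC.ext l, k => SC.ext (l.attach.map fun p => (p.1.1, subst u p.1.2 k))
  | SC.int l, k => SC.int (l.attach.map fun p => (p.1.1, subst u p.1.2 k))
  | SC.var x, k => if x = k then u else SC.var x
  | SC.mu b, k => SC.mu (subst u b (k + 1))
termination_by s _ => sizeOf s
decreasing_by
  · obtain ⟨⟨a1, s1⟩, hp⟩ := p
    have := List.sizeOf_lt_of_mem hp
    simp_wf; simp at this; omega
  · obtain ⟨⟨a1, s1⟩, hp⟩ := p
    have := List.sizeOf_lt_of_mem hp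
    simp_wf; simp at this; omega
  · simp_wf

/-- One-step unfolding of a recursive contract: `rec x.σ  ↦  σ[rec x.σ / x]`. -/
def unfold (b : SC) : SC := subst (SC.mu b) b 0

/-- All free de Bruijn indices are `< n`. -/
inductive ClosedAbove : SC → ℕ → Prop where
  | one : ∀ n, ClosedAbove .one n
  | ext : ∀ l n, (∀ p ∈ l, ClosedAbove p.2 n) → ClosedAbove (.ext l) n
  | int : ∀ l n, (∀ p ∈ l, ClosedAbove p.2 n) → ClosedAbove (.int l) n
  | var : ∀ x n, x < n → ClosedAbove (.var x) n
  | mu : ∀ b n, ClosedAbove b (n + 1) → ClosedAbove (.mu b) n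

/-- Structural well-formedness: choices are nonempty with pairwise distinct names,
    and recursion bodies are not variables (contractiveness). -/
inductive WF : SC → Prop where
  | one : WF .one
  | ext : ∀ l, l ≠ [] → (l.map Prod.fst).Nodup → (∀ p ∈ l, WF p.2) → WF (.ext l)
  | int : ∀ l, l ≠ [] → (l.map Prod.fst).Nodup → (∀ p ∈ l, WF p.2) → WF (.int l)
  | var : ∀ x, WF (.var x)
  | mu : ∀ b, (∀ x, b ≠ .var x) → WF b → WF (.mu b)

/-- τ-transitions of session contracts (with equi-recursive unfolding). -/
inductive Tau : SC → SC → Prop where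
  | int : ∀ l p, p ∈ l → Tau (SC.int l) (SC.int [p])
  | unfold : ∀ b σ', Tau b.unfold σ' → Tau (SC.mu b) σ'

/-- Labelled transitions of session contracts (with equi-recursive unfolding). -/
inductive Step : SC → Act → SC → Prop where
  | ext : ∀ l a σ, (a, σ) ∈ l → Step (SC.ext l) (Act.inp a) σ
  | out : ∀ a σ, Step (SC.int [(a, σ)]) (Act.out a) σ
  | unfold : ∀ b α σ', Step b.unfold α σ' → Step (SC.mu b) α σ'

end SC

/-- `σ` is a session contract: a closed, well-formed raw session contract. -/
def IsContract (σ : SC) : Prop := σ.ClosedAbove 0 ∧ σ.WF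

/-- Raw session orchestrators: `one` = 1, `choice l` = μ₁.f₁ ∨ ⋯ ∨ μₙ.fₙ,
    de Bruijn variables and recursion. -/
inductive Orch : Type where
  | one : Orch
  | choice : List (OAct × Orch) → Orch
  | var : ℕ → Orch
  | mu : Orch → Orch

namespace Orch

/-- Simultaneous substitution of the (closed) orchestrators `θ` for the free variables. -/
def msubst : Orch → List Orch → Orch
  | .one, _ => .one
  | .choice l, θ => .choice (l.attach.map fun p => (p.1.1, msubst p.1.2 θ))
  | .var x, θ => θ.getD x (.var x)
  | .mu b, θ => .mu (msubst b (Orch.var 0 :: θ))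
termination_by f _ => sizeOf f
decreasing_by
  · obtain ⟨⟨a1, s1⟩, hp⟩ := p
    have := List.sizeOf_lt_of_mem hp
    simp_wf; simp at this; omega
  · simp_wf

/-- One-step unfolding of a recursive orchestrator. -/
def unfold (b : Orch) : Orch := msubst b [Orch.mu b]

inductive ClosedAbove : Orch → ℕ → Prop where
  | one : ∀ n, ClosedAbove .one n
  | choice : ∀ l n, (∀ p ∈ l, ClosedAbove p.2 n) → ClosedAbove (.choice l) n
  | var : ∀ x n, x < n → ClosedAbove (.var x) n
  | mu : ∀ b n, ClosedAbove b (n + 1) → ClosedAbove (.mu b) n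

/-- Structural well-formedness of orchestrators: every choice is nonempty and either all
    its prefixes are of category ι_L, or all of category ι_R, or it is a single prefix of
    category o; recursion bodies are not variables. -/
inductive WF : Orch → Prop where
  | one : WF .one
  | choice : ∀ l, l ≠ [] →
      ((∀ p ∈ l, OAct.catL p.1) ∨ (∀ p ∈ l, OAct.catR p.1) ∨
        (∃ μ g, OAct.catO μ ∧ l = [(μ, g)])) →
      (∀ p ∈ l, WF p.2) → WF (.choice l)
  | var : ∀ x, WF (.var x)
  | mu : ∀ b, (∀ x, b ≠ .var x) → WF b → WF (.mu b)

/-- LTS of orchestrators (with equi-recursive unfolding). -/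
inductive Step : Orch → OAct → Orch → Prop where
  | pre : ∀ l μ g, (μ, g) ∈ l → Step (Orch.choice l) μ g
  | unfold : ∀ b μ g, Step b.unfold μ g → Step (Orch.mu b) μ g

/-- Finite traces of an orchestrator. -/
inductive Trace : Orch → List OAct → Orch → Prop where
  | nil : ∀ f, Trace f [] f
  | cons : ∀ f μ g ms h, Step f μ g → Trace g ms h → Trace f (μ :: ms) h

def NoStep (f : Orch) : Prop := ¬ ∃ μ g, Step f μ g

end Orch

/-- `f` is a session orchestrator: closed and well-formed. -/
def IsOrch (f : Orch) : Prop := f.ClosedAbove 0 ∧ f.WF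

/-! ### Orchestrated systems ρ ∥_f σ -/

abbrev Conf := SC × Orch × SC

namespace Sys

/-- Internal (τ) steps of an orchestrated system. -/
inductive Tau : Conf → Conf → Prop where
  | client : ∀ ρ ρ' f σ, SC.Tau ρ ρ' → Tau (ρ, f, σ) (ρ', f, σ)
  | server : ∀ ρ f σ σ', SC.Tau σ σ' → Tau (ρ, f, σ) (ρ, f, σ')

/-- Steps of an orchestrated system, labelled by the orchestration action performed. -/
inductive Step : Conf → OAct → Conf → Prop where
  | syncCS : ∀ ρ ρ' f f' σ σ' a, SC.Step ρ (Act.out a) ρ' → Orch.Step f (OAct.cSync a) f' →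
      SC.Step σ (Act.inp a) σ' → Step (ρ, f, σ) (OAct.cSync a) (ρ', f', σ')
  | syncSC : ∀ ρ ρ' f f' σ σ' a, SC.Step ρ (Act.inp a) ρ' → Orch.Step f (OAct.sSync a) f' →
      SC.Step σ (Act.out a) σ' → Step (ρ, f, σ) (OAct.sSync a) (ρ', f', σ')
  | cIn : ∀ ρ ρ' f f' σ a, SC.Step ρ (Act.out a) ρ' → Orch.Step f (OAct.cIn a) f' →
      Step (ρ, f, σ) (OAct.cIn a) (ρ', f', σ)
  | cOut : ∀ ρ ρ' f f' σ a, SC.Step ρ (Act.inp a) ρ' → Orch.Step f (OAct.cOut a) f' →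
      Step (ρ, f, σ) (OAct.cOut a) (ρ', f', σ)
  | sIn : ∀ ρ f f' σ σ' a, Orch.Step f (OAct.sIn a) f' → SC.Step σ (Act.out a) σ' →
      Step (ρ, f, σ) (OAct.sIn a) (ρ, f', σ')
  | sOut : ∀ ρ f f' σ σ' a, Orch.Step f (OAct.sOut a) f' → SC.Step σ (Act.inp a) σ' →
      Step (ρ, f, σ) (OAct.sOut a) (ρ, f', σ')

/-- Any number of τ-steps. -/
def TauRT : Conf → Conf → Prop := Relation.ReflTransGen Tau

/-- Weak labelled step `⟹^μ`. -/
def WStep (c : Conf) (μ : OAct) (c' : Conf) : Prop :=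
  ∃ c₁ c₂, TauRT c c₁ ∧ Step c₁ μ c₂ ∧ TauRT c₂ c'

/-- `Exec c ms c'`: the system performs the finite sequence `ms` of orchestration
    actions (interspersed with τ-steps), i.e. `c ⟹^{ms} c'`. -/
inductive Exec : Conf → List OAct → Conf → Prop where
  | nil : ∀ c c', TauRT c c' → Exec c [] c'
  | cons : ∀ c c₁ c₂ μ ms c', TauRT c c₁ → Step c₁ μ c₂ → Exec c₂ ms c' →
      Exec c (μ :: ms) c'

/-- Infinite executions along the infinite sequence `s` of orchestration actions. -/
def InfExec (c : Conf) (s : ℕ → OAct) : Prop :=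
  ∃ cs : ℕ → Conf, cs 0 = c ∧ ∀ n, WStep (cs n) (s n) (cs (n + 1))

/-- `c ↛`: no τ-step and no labelled step is possible. -/
def Stuck (c : Conf) : Prop := (¬ ∃ c', Tau c c') ∧ (¬ ∃ μ c', Step c μ c')

end Sys

/-- `f` is ρ·σ strict: every finite trace of `f` can be performed by the
    orchestrated system ρ ∥_f σ. -/
def Strict (ρ : SC) (f : Orch) (σ : SC) : Prop :=
  ∀ ms g, Orch.Trace f ms g → ∃ c', Sys.Exec (ρ, f, σ) ms c'

/-- Disrespectful strict compliance `f : ρ ⊣⊩ᵈˢ σ`. -/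
def DSCompliant (f : Orch) (ρ σ : SC) : Prop :=
  Strict ρ f σ ∧
  ∀ ms ρ' f' σ', Sys.Exec (ρ, f, σ) ms (ρ', f', σ') → Sys.Stuck (ρ', f', σ') → ρ' = SC.one

/-! ### Buffers and respectfulness -/

/-- The contribution of one orchestration action to the two buffer counters
    (client-to-server, server-to-client) for the name `a`. -/
def OAct.delta : OAct → Name → ℤ × ℤ
  | .cIn b, a => (if b = a then 1 else 0, 0)
  | .cOut b, a => (if b = a then -1 else 0, 0)
  | .sIn b, a => (0, if b = a then 1 else 0)
  | .sOut b, a => (0, if b = a then -1 else 0)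
  | _, _ => (0, 0)

/-- The state of the (initially empty) buffer for name `a` after the finite sequence
    `ms`: `(client-to-server count, server-to-client count)`. -/
def bufCount (ms : List OAct) (a : Name) : ℤ × ℤ :=
  ((ms.map fun μ => (μ.delta a).1).sum, (ms.map fun μ => (μ.delta a).2).sum)

/-- The actions kept by the left-restriction `μ⃗↾ₐ`: exactly ⟨ε,ā⟩ and ⟨a,ε⟩. -/
def OAct.keepA (a : Name) (μ : OAct) : Prop := μ = OAct.sOut a ∨ μ = OAct.cIn a

def OAct.isSIn : OAct → Prop
  | .sIn _ => True
  | _ => False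

/-- A finite or infinite sequence of orchestration actions. -/
inductive OSeq : Type where
  | fin : List OAct → OSeq
  | inf : (ℕ → OAct) → OSeq

namespace OSeq

/-- The finite prefixes of a sequence. -/
def prefixes : OSeq → Set (List OAct)
  | .fin l => {t | t <+: l}
  | .inf s => {t | ∃ n, t = (List.range n).map s}

/-- Soundness: along every prefix, both buffer counts of every name stay ≥ 0. -/
def Sound (v : OSeq) : Prop :=
  ∀ t ∈ v.prefixes, ∀ a, 0 ≤ (bufCount t a).1 ∧ 0 ≤ (bufCount t a).2

/-- The left-restriction `μ⃗↾ₐ` is finite. -/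
def restrFinite : OSeq → Name → Prop
  | .fin _, _ => True
  | .inf s, a => ∃ N, ∀ n, N ≤ n → ¬ OAct.keepA a (s n)

/-- "After all of μ⃗ the client-to-server count of `a` is 0." -/
def csFinalZero : OSeq → Name → Prop
  | .fin l, a => (bufCount l a).1 = 0
  | .inf s, a => ∃ N, ∀ n, N ≤ n → (bufCount ((List.range n).map s) a).1 = 0

/-- The left-restriction `μ⃗↾ₐ` is definitely-⟨a,ε⟩: from some point on, every element
    of μ⃗ kept by the restriction is ⟨a,ε⟩. -/
def defCIn : OSeq → Name → Prop
  | .fin _, _ => True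
  | .inf s, a => ∃ N, ∀ n, N ≤ n → OAct.keepA a (s n) → s n = OAct.cIn a

/-- Client-respectfulness of a sequence. -/
def ClientRespectful (v : OSeq) : Prop :=
  ∀ a, (v.restrFinite a ∧ v.csFinalZero a) ∨ (¬ v.restrFinite a ∧ ¬ v.defCIn a)

/-- Non-definitely server-inputted sequences. -/
def NonDefSI : OSeq → Prop
  | .fin _ => True
  | .inf s => ¬ ∃ N, ∀ n, N ≤ n → OAct.isSIn (s n)

/-- Respectful sequences. -/
def Respectful (v : OSeq) : Prop := v.Sound ∧ v.ClientRespectful ∧ v.NonDefSI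

end OSeq

/-- Maximal traces of an orchestrator: finite traces ending in an orchestrator without
    transitions, and infinite traces. -/
def Orch.MaxTrace (f : Orch) : OSeq → Prop
  | .fin ms => ∃ g, Orch.Trace f ms g ∧ g.NoStep
  | .inf s => ∃ fs : ℕ → Orch, fs 0 = f ∧ ∀ n, Orch.Step (fs n) (s n) (fs (n + 1))

/-- A respectful orchestrator: all its maximal traces are respectful. -/
def Orch.Respectful (f : Orch) : Prop := ∀ v, f.MaxTrace v → v.Respectful

/-- Orchestrated session compliance `f : ρ ⊣⊩ σ`. -/
def Compliant (f : Orch) (ρ σ : SC) : Prop :=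
  (∀ ms ρ' f' σ', Sys.Exec (ρ, f, σ) ms (ρ', f', σ') → Sys.Stuck (ρ', f', σ') →
      ρ' = SC.one ∧ OSeq.Respectful (.fin ms)) ∧
  (∀ s : ℕ → OAct, Sys.InfExec (ρ, f, σ) s → OSeq.Respectful (.inf s))

/-- `ρ ⊣⊩ σ`: some session orchestrator makes `ρ` compliant with `σ`. -/
def Comply (ρ σ : SC) : Prop := ∃ f, IsOrch f ∧ Compliant f ρ σ

/-- `ρ ⊣⊩ᵈˢ σ`. -/
def DSComply (ρ σ : SC) : Prop := ∃ f, IsOrch f ∧ DSCompliant f ρ σ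
/-- The union of the τ-transition relation and the action-labelled transition relations
of session contracts. -/
inductive SC.AnyStep : SC → SC → Prop where
  | tau : ∀ σ σ', SC.Tau σ σ' → SC.AnyStep σ σ'
  | act : ∀ σ α σ', SC.Step σ α σ' → SC.AnyStep σ σ'

/-!
Write `t[ρ]` (`SC.msub t ρ 0`) for the simultaneous substitution of a list `ρ` of closed terms
for the free variables of `t`. Unfolding commutes with it:
`(μ b)[ρ]` unfolds to `b[(μ b)[ρ] :: ρ]`. Hence every contract reachable from a closed `σ` is
`t[ρ]` for a subterm `t` of `σ` (or a one-branch internal choice cut out of one), where `ρ`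
is determined by the position of `t` in `σ`: its entries are `(μ b)[ρ']` for the enclosing
μ-subterms `μ b` of `t`. There are finitely many such terms, and `cl σ []` collects them by
structural recursion on `σ`.
-/
namespace SC

theorem sizeOf_snd_lt_of_mem {l : List (Name × SC)} {p : Name × SC} (h : p ∈ l) :
    sizeOf p.2 < sizeOf l := by
  have := List.sizeOf_lt_of_mem h
  obtain ⟨a, s⟩ := p
  simp only [Prod.mk.sizeOf_spec] at this
  show sizeOf s < sizeOf l
  omega

theorem subst_ext (u : SC) (l : List (Name × SC)) (k : ℕ) :
    subst u (.ext l) k = .ext (l.map fun p => (p.1, subst u p.2 k)) := by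
  rw [subst]
  exact congrArg _ (List.attach_map_val (f := fun p : Name × SC => (p.1, subst u p.2 k)))

theorem subst_int (u : SC) (l : List (Name × SC)) (k : ℕ) :
    subst u (.int l) k = .int (l.map fun p => (p.1, subst u p.2 k)) := by
  rw [subst]
  exact congrArg _ (List.attach_map_val (f := fun p : Name × SC => (p.1, subst u p.2 k)))

theorem ClosedAbove.mono {t : SC} {n m : ℕ} (h : t.ClosedAbove n) (hnm : n ≤ m) :
    t.ClosedAbove m := by
  induction h generalizing m with
  | one => exact .one m
  | ext l n _ ih => exact .ext l m fun p hp => ih p hp hnm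
  | int l n _ ih => exact .int l m fun p hp => ih p hp hnm
  | var x n hx => exact .var x m (by omega)
  | mu b n _ ih => exact .mu b m (ih (by omega))

theorem subst_eq_self {t : SC} {n : ℕ} (h : t.ClosedAbove n) (u : SC) {k : ℕ} (hk : n ≤ k) :
    subst u t k = t := by
  induction h generalizing k with
  | one => rw [subst]
  | ext l n _ ih =>
    rw [subst_ext]
    exact congrArg _ <| (List.map_congr_left fun p hp => by rw [ih p hp hk]; rfl).trans l.map_id
  | int l n _ ih =>
    rw [subst_int]
    exact congrArg _ <| (List.map_congr_left fun p hp => by rw [ih p hp hk]; rfl).trans l.map_id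
  | var x n hx => rw [subst, if_neg (by omega)]
  | mu b n _ ih => rw [subst, ih (by omega)]

def msub : SC → List SC → ℕ → SC
  | .one, _, _ => .one
  | .ext l, ρ, k => .ext (l.map fun p => (p.1, msub p.2 ρ k))
  | .int l, ρ, k => .int (l.map fun p => (p.1, msub p.2 ρ k))
  | .var x, ρ, k => if x < k then .var x else ρ.getD (x - k) (.var x)
  | .mu b, ρ, k => .mu (msub b ρ (k + 1))
termination_by t => sizeOf t
decreasing_by
  all_goals simp_wf
  all_goals have := sizeOf_snd_lt_of_mem ‹_›; omega

theorem msub_nil (t : SC) (k : ℕ) : msub t [] k = t := by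
  generalize hρ : ([] : List SC) = ρ
  induction t, ρ, k using msub.induct with
  | case1 => rw [msub]
  | case2 l ρ k ih | case3 l ρ k ih =>
    rw [msub]
    exact congrArg _ <| (List.map_congr_left fun p hp => by rw [ih p hp hρ]; rfl).trans l.map_id
  | case4 x ρ k hx => rw [msub, if_pos hx]
  | case5 x ρ k hx => rw [msub, if_neg hx, ← hρ]; rfl
  | case6 b ρ k ih => rw [msub, ih hρ]

theorem ClosedAbove.msub {ρ : List SC} (hρ : ∀ e ∈ ρ, e.ClosedAbove 0) {t : SC} {k : ℕ}
    (h : t.ClosedAbove (k + ρ.length)) : (t.msub ρ k).ClosedAbove k := by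
  induction t, ρ, k using msub.induct with
  | case1 => rw [SC.msub]; exact .one _
  | case2 l ρ k ih | case3 l ρ k ih =>
    rw [SC.msub]
    have h : ∀ p ∈ l, p.2.ClosedAbove (k + ρ.length) := by cases h; assumption
    constructor
    intro p hp
    obtain ⟨q, hq, rfl⟩ := List.mem_map.1 hp
    exact ih q hq hρ (h q hq)
  | case4 x ρ k hx => rw [SC.msub, if_pos hx]; exact .var x k hx
  | case5 x ρ k hx =>
    cases h with | var _ _ hlt =>
    have hi : x - k < ρ.length := by omega
    rw [SC.msub, if_neg hx, List.getD_eq_getElem _ _ hi]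
    exact (hρ _ (List.getElem_mem hi)).mono (Nat.zero_le k)
  | case6 b ρ k ih =>
    rw [SC.msub]
    cases h with | mu _ _ h =>
    exact .mu _ _ (ih hρ (by rwa [Nat.add_right_comm]))

theorem subst_msub (u : SC) {ρ : List SC} (hρ : ∀ e ∈ ρ, e.ClosedAbove 0) (t : SC)
    (k : ℕ) :
    subst u (t.msub ρ (k + 1)) k = t.msub (u :: ρ) k := by
  generalize hk : k + 1 = k'
  induction t, ρ, k' using msub.induct generalizing k with
  | case1 => rw [msub, msub, subst]
  | case2 l ρ k' ih =>
    rw [msub, subst_ext, msub, List.map_map]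
    exact congrArg _ (List.map_congr_left fun p hp => by simp [ih p hp hρ k hk])
  | case3 l ρ k' ih =>
    rw [msub, subst_int, msub, List.map_map]
    exact congrArg _ (List.map_congr_left fun p hp => by simp [ih p hp hρ k hk])
  | case4 x ρ k' hx =>
    rw [msub, if_pos hx, subst, msub]
    rcases Nat.lt_or_eq_of_le (Nat.le_of_lt_succ (hk ▸ hx)) with hxk | rfl
    · rw [if_neg hxk.ne, if_pos hxk]
    · rw [if_pos rfl, if_neg (lt_irrefl x), Nat.sub_self, List.getD_cons_zero]
  | case5 x ρ k' hx =>
    subst hk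
    have hxk : x - k = x - (k + 1) + 1 := by omega
    rw [msub, if_neg hx, msub, if_neg (by omega), hxk, List.getD_cons_succ,
      List.getD_eq_getElem?_getD]
    cases he : ρ[x - (k + 1)]? with
    | none => rw [Option.getD_none, subst, if_neg (by omega)]
    | some e => exact subst_eq_self (hρ e (List.mem_of_getElem? he)) u (Nat.zero_le k)
  | case6 b ρ k' ih =>
    subst hk
    rw [msub, subst, msub, ih hρ (k + 1) rfl]

theorem unfold_msub {ρ : List SC} (hρ : ∀ e ∈ ρ, e.ClosedAbove 0) (b : SC) :
    (b.msub ρ 1).unfold = b.msub ((SC.mu b).msub ρ 0 :: ρ) 0 := by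
  rw [unfold, show SC.mu (b.msub ρ 1) = (SC.mu b).msub ρ 0 by rw [msub]]
  exact subst_msub _ hρ b 0

def cl : SC → List SC → Set SC
  | .one, _ => {.one}
  | .ext l, ρ => insert ((SC.ext l).msub ρ 0) (⋃ p : {p // p ∈ l}, cl p.1.2 ρ)
  | .int l, ρ =>
      insert ((SC.int l).msub ρ 0)
        (⋃ p : {p // p ∈ l}, insert ((SC.int [p.1]).msub ρ 0) (cl p.1.2 ρ))
  | .var x, ρ => {(SC.var x).msub ρ 0}
  | .mu b, ρ => insert ((SC.mu b).msub ρ 0) (cl b ((SC.mu b).msub ρ 0 :: ρ))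
termination_by t => sizeOf t
decreasing_by
  all_goals simp_wf
  all_goals have := sizeOf_snd_lt_of_mem p.2; omega

theorem finite_cl (t : SC) (ρ : List SC) : (cl t ρ).Finite := by
  induction t, ρ using cl.induct with
  | case1 => rw [cl]; exact Set.finite_singleton _
  | case2 l ρ ih =>
    have : Finite {p // p ∈ l} := l.finite_toSet.to_subtype
    rw [cl]; exact (Set.finite_iUnion ih).insert _
  | case3 l ρ ih =>
    have : Finite {p // p ∈ l} := l.finite_toSet.to_subtype
    rw [cl]; exact (Set.finite_iUnion fun p => (ih p).insert _).insert _
  | case4 => rw [cl]; exact Set.finite_singleton _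
  | case5 b ρ ih => rw [cl]; exact ih.insert _

theorem msub_mem_cl (t : SC) (ρ : List SC) : t.msub ρ 0 ∈ cl t ρ := by
  cases t <;> rw [cl] <;> simp [msub]

theorem cl_subset_cl_ext {l : List (Name × SC)} {p : Name × SC} (hp : p ∈ l) (ρ : List SC) :
    cl p.2 ρ ⊆ cl (.ext l) ρ := by
  rw [cl.eq_2]
  exact (Set.subset_iUnion (fun q : {q // q ∈ l} => cl q.1.2 ρ) ⟨p, hp⟩).trans
    (Set.subset_insert _ _)

theorem cl_subset_cl_int {l : List (Name × SC)} {p : Name × SC} (hp : p ∈ l) (ρ : List SC) :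
    cl p.2 ρ ⊆ cl (.int l) ρ := by
  rw [cl.eq_3]
  exact (Set.subset_insert _ _).trans ((Set.subset_iUnion (fun q : {q // q ∈ l} =>
      insert ((SC.int [q.1]).msub ρ 0) (cl q.1.2 ρ)) ⟨p, hp⟩).trans (Set.subset_insert _ _))

theorem cl_int_singleton_subset {l : List (Name × SC)} {p : Name × SC} (hp : p ∈ l)
    (ρ : List SC) : cl (.int [p]) ρ ⊆ cl (.int l) ρ := by
  have hsub : insert ((SC.int [p]).msub ρ 0) (cl p.2 ρ) ⊆ cl (.int l) ρ := by
    rw [cl.eq_3]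
    exact (Set.subset_iUnion (fun q : {q // q ∈ l} =>
      insert ((SC.int [q.1]).msub ρ 0) (cl q.1.2 ρ)) ⟨p, hp⟩).trans (Set.subset_insert _ _)
  rw [cl]
  simpa using hsub

theorem cl_subset_cl_mu (b : SC) (ρ : List SC) :
    cl b ((SC.mu b).msub ρ 0 :: ρ) ⊆ cl (.mu b) ρ := by
  rw [cl.eq_5]; exact Set.subset_insert _ _

inductive GoodEnv (T : Set SC) : List SC → Prop
  | nil : GoodEnv T []
  | cons {b : SC} {ρ : List SC} : GoodEnv T ρ → b.ClosedAbove (ρ.length + 1) →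
      cl (.mu b) ρ ⊆ T → GoodEnv T ((SC.mu b).msub ρ 0 :: ρ)

variable {T : Set SC}

theorem GoodEnv.closedAbove {ρ : List SC} (h : GoodEnv T ρ) :
    ∀ e ∈ ρ, e.ClosedAbove 0 := by
  induction h with
  | nil => simp
  | cons _ hb _ ih =>
    intro e he
    rcases List.mem_cons.1 he with rfl | he
    · exact ClosedAbove.msub ih (.mu _ _ (by rwa [Nat.zero_add]))
    · exact ih e he

theorem GoodEnv.exists_mu_eq_getElem {ρ : List SC} (h : GoodEnv T ρ) {x : ℕ}
    (hx : x < ρ.length) : ∃ b ρ', GoodEnv T ρ' ∧ b.ClosedAbove (ρ'.length + 1) ∧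
      cl (.mu b) ρ' ⊆ T ∧ (SC.mu b).msub ρ' 0 = ρ[x] := by
  induction h generalizing x with
  | nil => simp at hx
  | cons hρ hb hT ih =>
    cases x with
    | zero => exact ⟨_, _, hρ, hb, hT, rfl⟩
    | succ x => exact ih (by simpa using hx)

def Represented (T : Set SC) (s : SC) : Prop :=
  ∃ t ρ, GoodEnv T ρ ∧ t.ClosedAbove ρ.length ∧ cl t ρ ⊆ T ∧ t.msub ρ 0 = s

variable {s : SC}

theorem represented_of_closedAbove (hs : s.ClosedAbove 0) : Represented (cl s []) s :=
  ⟨s, [], .nil, hs, subset_rfl, msub_nil s 0⟩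

theorem Represented.mem (h : Represented T s) : s ∈ T := by
  obtain ⟨t, ρ, -, -, hT, rfl⟩ := h
  exact hT (msub_mem_cl t ρ)

theorem Represented.exists_not_var (h : Represented T s) :
    ∃ t ρ, GoodEnv T ρ ∧ t.ClosedAbove ρ.length ∧ cl t ρ ⊆ T ∧ t.msub ρ 0 = s ∧
      ∀ x, t ≠ .var x := by
  obtain ⟨t, ρ, hρ, ht, hT, rfl⟩ := h
  by_cases hvar : ∃ x, t = .var x
  · obtain ⟨x, rfl⟩ := hvar
    cases ht with | var _ _ hx =>
    obtain ⟨b, ρ', hρ', hb, hT', he⟩ := hρ.exists_mu_eq_getElem hx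
    refine ⟨.mu b, ρ', hρ', .mu _ _ hb, hT', ?_, fun _ => SC.noConfusion⟩
    rw [he, msub, if_neg (Nat.not_lt_zero x), Nat.sub_zero, List.getD_eq_getElem _ _ hx]
  · simp only [not_exists] at hvar
    exact ⟨t, ρ, hρ, ht, hT, rfl, hvar⟩

theorem Represented.unfold {b : SC} (h : Represented T (.mu b)) : Represented T b.unfold := by
  obtain ⟨t, ρ, hρ, ht, hT, he, hvar⟩ := h.exists_not_var
  cases t with
  | mu b' =>
    rw [msub] at he
    cases he
    cases ht with | mu _ _ ht =>
    exact ⟨b', _, hρ.cons ht hT, ht, (cl_subset_cl_mu b' ρ).trans hT,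
      (unfold_msub hρ.closedAbove b').symm⟩
  | var x => exact absurd rfl (hvar x)
  | _ => simp [msub] at he

theorem Represented.of_ext_mem {l : List (Name × SC)} {p : Name × SC}
    (h : Represented T (.ext l)) (hp : p ∈ l) : Represented T p.2 := by
  obtain ⟨t, ρ, hρ, ht, hT, he, hvar⟩ := h.exists_not_var
  cases t with
  | ext l' =>
    rw [msub] at he
    cases he
    obtain ⟨q, hq, rfl⟩ := List.mem_map.1 hp
    cases ht with | ext _ _ ht =>
    exact ⟨q.2, ρ, hρ, ht q hq, (cl_subset_cl_ext hq ρ).trans hT, rfl⟩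
  | var x => exact absurd rfl (hvar x)
  | _ => simp [msub] at he

theorem Represented.of_int_mem {l : List (Name × SC)} {p : Name × SC}
    (h : Represented T (.int l)) (hp : p ∈ l) : Represented T p.2 := by
  obtain ⟨t, ρ, hρ, ht, hT, he, hvar⟩ := h.exists_not_var
  cases t with
  | int l' =>
    rw [msub] at he
    cases he
    obtain ⟨q, hq, rfl⟩ := List.mem_map.1 hp
    cases ht with | int _ _ ht =>
    exact ⟨q.2, ρ, hρ, ht q hq, (cl_subset_cl_int hq ρ).trans hT, rfl⟩
  | var x => exact absurd rfl (hvar x)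
  | _ => simp [msub] at he

theorem Represented.int_singleton {l : List (Name × SC)} {p : Name × SC}
    (h : Represented T (.int l)) (hp : p ∈ l) : Represented T (.int [p]) := by
  obtain ⟨t, ρ, hρ, ht, hT, he, hvar⟩ := h.exists_not_var
  cases t with
  | int l' =>
    rw [msub] at he
    cases he
    obtain ⟨q, hq, rfl⟩ := List.mem_map.1 hp
    cases ht with | int _ _ ht =>
    refine ⟨.int [q], ρ, hρ, .int _ _ ?_, (cl_int_singleton_subset hq ρ).trans hT, ?_⟩
    · simpa using ht q hq
    · simp [msub]
  | var x => exact absurd rfl (hvar x)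
  | _ => simp [msub] at he

theorem Represented.of_tau {s' : SC} (h : Represented T s) (hs : Tau s s') :
    Represented T s' := by
  induction hs with
  | int l p hp => exact h.int_singleton hp
  | unfold b σ' _ ih => exact ih h.unfold

theorem Represented.of_step {α : Act} {s' : SC} (h : Represented T s) (hs : Step s α s') :
    Represented T s' := by
  induction hs with
  | ext l a σ hmem => exact h.of_ext_mem hmem
  | out a σ => exact h.of_int_mem (List.mem_singleton_self _)
  | unfold b α σ' _ ih => exact ih h.unfold

theorem Represented.of_anyStep {s' : SC} (h : Represented T s) (hs : AnyStep s s') :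
    Represented T s' := by
  cases hs with
  | tau _ hs => exact h.of_tau hs
  | act _ _ hs => exact h.of_step hs

end SC

/-- For every session contract σ, the set of session contracts reachable
from σ under the reflexive–transitive closure of its LTS is finite. -/
theorem reachable_set_finite :
    ∀ σ : SC, IsContract σ →
      {σ' | Relation.ReflTransGen SC.AnyStep σ σ'}.Finite := by
  intro σ hσ
  refine (SC.finite_cl σ []).subset fun σ' hσ' => ?_
  have hrep : SC.Represented (SC.cl σ []) σ' := by
    induction hσ' with
    | refl => exact SC.represented_of_closedAbove hσ.1
    | tail _ hs ih => exact ih.of_anyStep hs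
  exact hrep.mem
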